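/- arXiv:2409.03410 — 5 statements merged into one kernel-verified Lean document; each statement's English description precedes it below -/
import Mathlib

section
/- If F is a class of real-valued functions contained in a k-dimensional linear space, then the Boolean class Pos(F) = { x ↦ 1_{f(x) ≥ 0} : f ∈ F } has VC dimension at most k + 1. -/
/-- A class `C` of subsets of `X` shatters a finite set `S` if every subset of `S`
can be picked out as `c ∩ S` for some `c ∈ C`. -/
def Shatters {X : Type*} (C : Set (Set X)) (S : Finset X) : Prop :=
  ∀ T ⊆ S, ∃ c ∈ C, ∀ x ∈ S, x ∈ c ↔ x ∈ T

/-- If `F` is a set of real-valued functions contained in a `k`-dimensional linear space,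
then the class `Pos(F) = { {x | f x ≥ 0} : f ∈ F }` has VC dimension at most `k + 1`. -/
theorem stmt4 {X : Type*} (k : ℕ) (V : Submodule ℝ (X → ℝ))
    [FiniteDimensional ℝ V] (hV : Module.finrank ℝ V = k)
    (F : Set (X → ℝ)) (hF : ∀ f ∈ F, f ∈ V)
    (S : Finset X)
    (hS : Shatters {s : Set X | ∃ f ∈ F, s = {x | 0 ≤ f x}} S) :
    S.card ≤ k + 1 := by
  classical
  by_contra hcard
  push_neg at hcard
  -- evaluation functionals
  set v : S → Module.Dual ℝ V := fun x => (LinearMap.proj (x : X)).comp V.subtype with hv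
  have hnli : ¬ LinearIndependent ℝ v := by
    intro hli
    have h1 := hli.fintype_card_le_finrank
    rw [Fintype.card_coe, Subspace.dual_finrank_eq, hV] at h1
    omega
  rw [Fintype.not_linearIndependent_iff] at hnli
  obtain ⟨g, hg0, i₀, hi₀⟩ := hnli
  -- key claim: no such dependence with a positive coefficient
  have key : ∀ g : S → ℝ, (∑ i, g i • v i = 0) → (∃ i, 0 < g i) → False := by
    intro g hg0 ⟨j, hj⟩
    set T : Finset X := Finset.image Subtype.val (Finset.univ.filter (fun i : S => g i ≤ 0)) with hT
    have hTmem : ∀ i : S, (i : X) ∈ T ↔ g i ≤ 0 := by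
      intro i
      simp only [hT, Finset.mem_image, Finset.mem_filter, Finset.mem_univ, true_and]
      constructor
      · rintro ⟨a, ha, hav⟩
        rwa [Subtype.ext hav] at ha
      · exact fun h => ⟨i, h, rfl⟩
    have hTS : T ⊆ S := by
      intro x hx
      simp only [hT, Finset.mem_image] at hx
      obtain ⟨a, _, rfl⟩ := hx
      exact a.2
    obtain ⟨c, hc, hciff⟩ := hS T hTS
    obtain ⟨f, hfF, rfl⟩ := hc
    have hfV : f ∈ V := hF f hfF
    have hsum : (∑ i, g i • v i) ⟨f, hfV⟩ = 0 := by rw [hg0]; rfl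
    rw [LinearMap.sum_apply] at hsum
    simp only [LinearMap.smul_apply, hv, LinearMap.comp_apply, Submodule.subtype_apply,
      LinearMap.proj_apply, smul_eq_mul] at hsum
    have hterm : ∀ i : S, g i * f (i : X) ≤ 0 := by
      intro i
      rcases le_or_gt (g i) 0 with h | h
      · have : (0:ℝ) ≤ f (i : X) := by
          have := (hciff (i : X) i.2).2 ((hTmem i).2 h)
          exact this
        exact mul_nonpos_of_nonpos_of_nonneg h this
      · have hnot : ¬ ((i : X) ∈ T) := by rw [hTmem]; linarith
        have : f (i : X) < 0 := by
          by_contra hge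
          push_neg at hge
          exact hnot ((hciff (i : X) i.2).1 hge)
        exact le_of_lt (mul_neg_of_pos_of_neg h this)
    have hstrict : g j * f (j : X) < 0 := by
      have hnot : ¬ ((j : X) ∈ T) := by rw [hTmem]; linarith
      have : f (j : X) < 0 := by
        by_contra hge
        push_neg at hge
        exact hnot ((hciff (j : X) j.2).1 hge)
      exact mul_neg_of_pos_of_neg hj this
    have : (∑ i, g i * f (i : X)) < 0 := by
      calc (∑ i, g i * f (i : X)) < ∑ _i : S, (0:ℝ) := by
            apply Finset.sum_lt_sum (fun i _ => hterm i) ⟨j, Finset.mem_univ j, hstrict⟩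
        _ = 0 := by simp
    linarith [hsum, this]
  rcases lt_or_gt_of_ne hi₀ with h | h
  · exact key (-g) (by rw [show (∑ i, (-g) i • v i) = -(∑ i, g i • v i) by rw [← Finset.sum_neg_distrib]; exact Finset.sum_congr rfl fun i _ => (neg_smul (g i) (v i)), hg0, neg_zero]) ⟨i₀, by simpa using h⟩
  · exact key g hg0 ⟨i₀, h⟩
end

section
/- Let C_1, ..., C_m be classes of subsets with VC(C_j) = V_j and set V = Σ_j V_j. Then the class of pairwise intersections ⊓_{j=1}^m C_j = { ∩_j C_j : C_j ∈ C_j } has VC dimension at most c_1 · V · log(c_2 m), where c_1 = e/((e-1) log 2) and c_2 is a universal constant. -/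
/-- The VC dimension (in `ℕ∞`) of a class of subsets. -/
noncomputable def vcDimE {X : Type*} (C : Set (Set X)) : ℕ∞ :=
  sSup {n : ℕ∞ | ∃ S : Finset X, (S.card : ℕ∞) = n ∧ Shatters C S}

/-!
Shattering `S` by the intersection class forces `2 ^ |S|` distinct traces on `S`, while every
trace of an intersection is determined by the traces of its factors. Hence
`2 ^ n ≤ ∏ⱼ |C_j ∩ S| ≤ ∏ⱼ Φ(n, V_j)` with `Φ(n, d) = ∑_{k ≤ d} C(n, k)` by Sauer–Shelah.
For `0 < r ≤ 1` the binomial theorem gives `Φ(n, d) r^d ≤ (1 + r)^n ≤ e^{n r}`, so with `r = 1/B`,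
`n log 2 ≤ V log B + n m / B`. Choosing `B = e m / log 2` makes the last term `n log 2 / e`,
which is absorbed into the left-hand side.
-/

section Trace

open scoped Finset

variable {X : Type*}

noncomputable def trace (C : Set (Set X)) (S : Finset X) : Finset (Finset X) :=
  open Classical in S.powerset.filter fun t => ∃ c ∈ C, ∀ x ∈ S, x ∈ c ↔ x ∈ t

lemma mem_trace {C : Set (Set X)} {S t : Finset X} :
    t ∈ trace C S ↔ t ⊆ S ∧ ∃ c ∈ C, ∀ x ∈ S, x ∈ c ↔ x ∈ t := by
  simp [trace]

lemma Shatters.powerset_subset_trace {C : Set (Set X)} {S : Finset X} (h : Shatters C S) :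
    S.powerset ⊆ trace C S := fun t ht =>
  mem_trace.2 ⟨Finset.mem_powerset.1 ht, h t (Finset.mem_powerset.1 ht)⟩

lemma Shatters.two_pow_card_le_card_trace {C : Set (Set X)} {S : Finset X} (h : Shatters C S) :
    2 ^ #S ≤ #(trace C S) :=
  Finset.card_powerset S ▸ Finset.card_le_card h.powerset_subset_trace

lemma Shatters.of_trace [DecidableEq X] {C : Set (Set X)} {S t : Finset X}
    (h : (trace C S).Shatters t) : Shatters C t := by
  obtain ⟨u, hu, htu⟩ := h.exists_superset
  have htS : t ⊆ S := htu.trans (mem_trace.1 hu).1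
  intro U hU
  obtain ⟨u, hu, rfl⟩ := h hU
  obtain ⟨-, c, hc, hcu⟩ := mem_trace.1 hu
  exact ⟨c, hc, fun x hx => by simp [hcu x (htS hx), hx]⟩

lemma card_le_of_shatters {C : Set (Set X)} {d : ℕ} (hC : vcDimE C ≤ d) {S : Finset X}
    (h : Shatters C S) : #S ≤ d := by
  have : (#S : ℕ∞) ≤ vcDimE C := le_sSup ⟨S, rfl, h⟩
  exact_mod_cast this.trans hC

end Trace

section SauerShelah

open Finset

variable {X : Type*} [DecidableEq X]

lemma card_le_sum_choose_of_forall_subset (𝒜 : Finset (Finset X)) (S : Finset X) (d : ℕ)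
    (hS : ∀ t ∈ 𝒜, t ⊆ S) (hd : ∀ t, 𝒜.Shatters t → #t ≤ d) :
    #𝒜 ≤ ∑ k ∈ range (d + 1), (#S).choose k := by
  simp_rw [← card_powersetCard]
  refine (card_le_card_shatterer 𝒜).trans <|
    (card_le_card fun t ht => mem_biUnion.2 ⟨#t, ?_⟩).trans card_biUnion_le
  rw [mem_shatterer] at ht
  obtain ⟨u, hu, htu⟩ := ht.exists_superset
  exact ⟨mem_range.2 (Nat.lt_succ_of_le (hd t ht)), mem_powersetCard.2 ⟨htu.trans (hS u hu), rfl⟩⟩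

lemma card_trace_le_sum_choose {C : Set (Set X)} {d : ℕ} (hC : vcDimE C ≤ d) (S : Finset X) :
    #(trace C S) ≤ ∑ k ∈ range (d + 1), (#S).choose k :=
  card_le_sum_choose_of_forall_subset _ S d (fun _ ht => (mem_trace.1 ht).1)
    fun _ ht => card_le_of_shatters hC (Shatters.of_trace ht)

end SauerShelah

section Intersection

open Finset

variable {ι X : Type*} [Fintype ι]

def iInterClass (C : ι → Set (Set X)) : Set (Set X) :=
  {s | ∃ c : ι → Set X, (∀ j, c j ∈ C j) ∧ s = ⋂ j, c j}

lemma card_trace_iInterClass_le (C : ι → Set (Set X)) (S : Finset X) :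
    #(trace (iInterClass C) S) ≤ ∏ j, #(trace (C j) S) := by
  classical
  rw [← Fintype.card_piFinset]
  refine (card_le_card fun t ht => ?_).trans
    (card_image_le (f := fun t : ι → Finset X => S.filter fun x => ∀ j, x ∈ t j))
  obtain ⟨htS, -, ⟨c, hc, rfl⟩, hct⟩ := mem_trace.1 ht
  refine mem_image.2 ⟨fun j => S.filter (· ∈ c j), Fintype.mem_piFinset.2 fun j => ?_, ?_⟩
  · exact mem_trace.2 ⟨filter_subset _ _, c j, hc j, fun x hx => by simp [hx]⟩
  · ext x
    by_cases hx : x ∈ S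
    · simpa [hx] using hct x hx
    · simp only [mem_filter, hx, false_and, false_iff]
      exact fun h => hx (htS h)

end Intersection

section Binomial

open Finset

lemma sum_range_choose_mul_pow_le (n d : ℕ) {r : ℝ} (hr₀ : 0 ≤ r) (hr₁ : r ≤ 1) :
    (∑ k ∈ range (d + 1), (n.choose k : ℝ)) * r ^ d ≤ (1 + r) ^ n := by
  calc (∑ k ∈ range (d + 1), (n.choose k : ℝ)) * r ^ d
      ≤ ∑ k ∈ range (d + 1), (n.choose k : ℝ) * r ^ k := by
        rw [sum_mul]
        exact sum_le_sum fun k hk => mul_le_mul_of_nonneg_left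
          (pow_le_pow_of_le_one hr₀ hr₁ (Nat.lt_succ_iff.1 (mem_range.1 hk))) (by positivity)
    _ ≤ ∑ k ∈ range (n + d + 1), (n.choose k : ℝ) * r ^ k :=
        sum_le_sum_of_subset_of_nonneg (range_subset_range.2 (by omega)) fun _ _ _ => by
          positivity
    _ = ∑ k ∈ range (n + 1), (n.choose k : ℝ) * r ^ k :=
        (sum_subset (range_subset_range.2 (by omega)) fun k _ hk => by
          simp [Nat.choose_eq_zero_of_lt (by simpa using hk : n < k)]).symm
    _ = (1 + r) ^ n := by
        rw [add_comm (1 : ℝ) r, add_pow]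
        exact sum_congr rfl fun k _ => by rw [one_pow, mul_one, mul_comm]

lemma log_sum_range_choose_le (n d : ℕ) {B : ℝ} (hB : 1 ≤ B) :
    Real.log (∑ k ∈ range (d + 1), (n.choose k : ℝ)) ≤ d * Real.log B + n / B := by
  have hB₀ : 0 < B := one_pos.trans_le hB
  have hsum : 0 < ∑ k ∈ range (d + 1), (n.choose k : ℝ) :=
    sum_pos' (fun _ _ => by positivity) ⟨0, by simp⟩
  have key : (∑ k ∈ range (d + 1), (n.choose k : ℝ)) * B⁻¹ ^ d ≤ Real.exp (n / B) :=
    calc _ ≤ (1 + B⁻¹) ^ n :=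
          sum_range_choose_mul_pow_le n d (by positivity) (inv_le_one_of_one_le₀ hB)
      _ ≤ Real.exp B⁻¹ ^ n := by gcongr; linarith [Real.add_one_le_exp B⁻¹]
      _ = Real.exp (n / B) := by rw [← Real.exp_nat_mul, div_eq_mul_inv]
  have := Real.log_le_log (by positivity) key
  rw [Real.log_mul hsum.ne' (by positivity), Real.log_pow, Real.log_inv, Real.log_exp] at this
  linarith

end Binomial

open scoped Finset in
lemma card_mul_log_two_le_of_shatters_iInterClass {ι X : Type*} [Fintype ι]
    {C : ι → Set (Set X)} {V : ι → ℕ} (hV : ∀ j, vcDimE (C j) ≤ V j) {S : Finset X}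
    (hS : Shatters (iInterClass C) S) {B : ℝ} (hB : 1 ≤ B) :
    #S * Real.log 2 ≤ (∑ j, (V j : ℝ)) * Real.log B + #S * Fintype.card ι / B := by
  classical
  have hcount : (2 : ℝ) ^ #S ≤ ∏ j, (∑ k ∈ Finset.range (V j + 1), ((#S).choose k : ℝ)) := by
    exact_mod_cast hS.two_pow_card_le_card_trace.trans <| (card_trace_iInterClass_le C S).trans <|
      Finset.prod_le_prod' fun j _ => card_trace_le_sum_choose (hV j) S
  have hpos : ∀ j, 0 < ∑ k ∈ Finset.range (V j + 1), ((#S).choose k : ℝ) := fun j =>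
    Finset.sum_pos' (fun _ _ => by positivity) ⟨0, by simp⟩
  have := Real.log_le_log (by positivity) hcount
  rw [Real.log_pow, Real.log_prod fun j _ => (hpos j).ne'] at this
  calc #S * Real.log 2 ≤ ∑ j, Real.log (∑ k ∈ Finset.range (V j + 1), ((#S).choose k : ℝ)) := this
    _ ≤ ∑ j, ((V j : ℝ) * Real.log B + #S / B) :=
        Finset.sum_le_sum fun j _ => log_sum_range_choose_le _ _ hB
    _ = _ := by
        rw [Finset.sum_add_distrib, ← Finset.sum_mul, Finset.sum_const, Finset.card_univ,
          nsmul_eq_mul]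
        ring

/-- If `VC(C_j) = V_j` and `V = Σ_j V_j`, then the intersection class
`{ ∩_j c_j : c_j ∈ C_j }` has VC dimension at most `c₁ V log(c₂ m)`, where
`c₁ = e / ((e-1) log 2)` and `c₂` is a universal constant. -/
theorem stmt6 :
    ∃ c₂ : ℝ, 0 < c₂ ∧
      ∀ (X : Type) (m : ℕ), 0 < m →
        ∀ (C : Fin m → Set (Set X)) (V : Fin m → ℕ),
          (∀ j, vcDimE (C j) = (V j : ℕ∞)) →
          ∀ S : Finset X,
            Shatters
              {s : Set X | ∃ c : Fin m → Set X, (∀ j, c j ∈ C j) ∧ s = ⋂ j, c j} S →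
            (S.card : ℝ) ≤
              (Real.exp 1 / ((Real.exp 1 - 1) * Real.log 2)) * (∑ j, (V j : ℝ)) *
                Real.log (c₂ * m) := by
  have hlog2 : 0 < Real.log 2 := Real.log_pos one_lt_two
  have he : 2 < Real.exp 1 := by linarith [Real.exp_one_gt_d9]
  refine ⟨Real.exp 1 / Real.log 2, by positivity, fun X m hm C V hV S hS => ?_⟩
  have hm' : (1 : ℝ) ≤ m := by exact_mod_cast hm
  set B := Real.exp 1 / Real.log 2 * m with hB_def
  have hB : 1 ≤ B := by
    rw [hB_def, div_mul_eq_mul_div, le_div_iff₀ hlog2]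
    nlinarith [Real.log_two_lt_d9]
  have key := card_mul_log_two_le_of_shatters_iInterClass (fun j => (hV j).le) hS hB
  have hmB : (m : ℝ) / B = Real.log 2 / Real.exp 1 := by
    rw [hB_def]
    field_simp
  rw [Fintype.card_fin, mul_div_assoc, hmB] at key
  rw [mul_assoc, div_mul_eq_mul_div, le_div_iff₀ (by nlinarith)]
  field_simp at key
  linarith
end

section
/- Let x_1, ..., x_N be points in ℝ^d. The maximum halfspace depth max_η D(η, {x_i}) · N is at least ⌈N/(d+1)⌉, where D(η, {x_i}) = min_{u ∈ S^{d-1}} (1/N) #{ i : ⟨u, x_i⟩ ≤ ⟨u, η⟩ }. -/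
/-!
Call a set of indices `S` large if fewer than `k` indices lie outside it. Any `d + 1` large
sets miss at most `(d + 1)(k - 1) < N` indices in total, so they share an index, and the convex
hulls of the corresponding points share that point. By Helly's theorem all these hulls then
share a point `η`. A closed halfspace through `η` containing fewer than `k` points would leave a
large set strictly on the other side, whose hull cannot contain `η`.
-/

open Finset Module

variable {ι : Type*} [Fintype ι] [DecidableEq ι]

theorem Finset.exists_forall_mem_of_sum_card_compl_lt {I : Finset (Finset ι)}
    (h : ∑ S ∈ I, #Sᶜ < Fintype.card ι) : ∃ i, ∀ S ∈ I, i ∈ S := by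
  by_contra! hcover
  have hsub : (univ : Finset ι) ⊆ I.biUnion compl := fun i _ ↦ by
    obtain ⟨S, hSI, hiS⟩ := hcover i
    exact mem_biUnion.mpr ⟨S, hSI, mem_compl.mpr hiS⟩
  have := (card_le_card hsub).trans card_biUnion_le
  rw [card_univ] at this
  omega

variable {𝕜 E : Type*} [Field 𝕜] [LinearOrder 𝕜] [IsStrictOrderedRing 𝕜]
  [AddCommGroup E] [Module 𝕜 E]

theorem le_card_filter_le_of_forall_mem_convexHull {x : ι → E} {k : ℕ} {η : E}
    (hη : ∀ S : Finset ι, #Sᶜ < k → η ∈ convexHull 𝕜 (x '' S)) (f : E →ₗ[𝕜] 𝕜) :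
    k ≤ #{i | f (x i) ≤ f η} := by
  by_contra! hlt
  let S : Finset ι := {i | f η < f (x i)}
  have hS : Sᶜ = ({i | f (x i) ≤ f η} : Finset ι) := by simp only [S, compl_filter, not_lt]
  have hhull : convexHull 𝕜 (x '' S) ⊆ {y | f η < f y} := by
    refine convexHull_min ?_ (convex_halfSpace_gt f.isLinear _)
    rintro _ ⟨i, hi, rfl⟩
    exact (mem_filter.mp hi).2
  exact lt_irrefl _ (hhull (hη S (hS ▸ hlt)))

variable [FiniteDimensional 𝕜 E]

theorem exists_forall_mem_convexHull_of_card_compl_lt (x : ι → E) {k : ℕ}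
    (hk : (finrank 𝕜 E + 1) * (k - 1) < Fintype.card ι) :
    ∃ η, ∀ S : Finset ι, #Sᶜ < k → η ∈ convexHull 𝕜 (x '' S) := by
  obtain ⟨η, hη⟩ := Convex.helly_theorem' (F := fun S : Finset ι ↦ convexHull 𝕜 (x '' S))
    (s := univ.filter fun S ↦ #Sᶜ < k) (fun _ _ ↦ convex_convexHull 𝕜 _) <| by
    intro I hI hIcard
    have hsum : ∑ S ∈ I, #Sᶜ ≤ #I * (k - 1) := by
      rw [← smul_eq_mul, ← sum_const]
      exact sum_le_sum fun S hS ↦ Nat.le_sub_one_of_lt (mem_filter.mp (hI hS)).2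
    obtain ⟨i, hi⟩ := exists_forall_mem_of_sum_card_compl_lt <|
      hsum.trans_lt <| (Nat.mul_le_mul_right _ hIcard).trans_lt hk
    exact ⟨x i, Set.mem_biInter fun S hS ↦ subset_convexHull 𝕜 _ ⟨i, hi S hS, rfl⟩⟩
  exact ⟨η, fun S hS ↦ Set.mem_iInter₂.mp hη S (by simpa using hS)⟩

theorem exists_centerpoint (x : ι → E) {k : ℕ}
    (hk : (finrank 𝕜 E + 1) * (k - 1) < Fintype.card ι) :
    ∃ η, ∀ f : E →ₗ[𝕜] 𝕜, k ≤ #{i | f (x i) ≤ f η} := by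
  obtain ⟨η, hη⟩ := exists_forall_mem_convexHull_of_card_compl_lt x hk
  exact ⟨η, le_card_filter_le_of_forall_mem_convexHull hη⟩

theorem mul_ceil_div_sub_one_lt {N : ℕ} (hN : 0 < N) (d : ℕ) :
    (d + 1) * (⌈(N : ℝ) / (d + 1)⌉₊ - 1) < N := by
  set k := ⌈(N : ℝ) / (d + 1)⌉₊
  have hk : 1 ≤ k := Nat.one_le_ceil_iff.mpr (by positivity)
  have hlt : ((k : ℝ) - 1) * (d + 1) < N := by
    rw [← lt_div_iff₀ (by positivity), sub_lt_iff_lt_add]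
    exact Nat.ceil_lt_add_one (by positivity)
  have : (((d + 1) * (k - 1) : ℕ) : ℝ) < N := by
    push_cast [Nat.cast_sub hk]
    linarith
  exact_mod_cast this

/-- Centerpoint theorem / lower bound on the maximal halfspace (Tukey) depth: for any
points `x_1, …, x_N ∈ ℝ^d` there is `η` such that every closed halfspace
`{x : ⟨u, x⟩ ≤ ⟨u, η⟩}` through `η` contains at least `⌈N/(d+1)⌉` of the points. -/
theorem stmt14 (d N : ℕ) (hN : 0 < N) (x : Fin N → EuclideanSpace ℝ (Fin d)) :
    ∃ η : EuclideanSpace ℝ (Fin d),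
      ∀ u : EuclideanSpace ℝ (Fin d), ‖u‖ = 1 →
        ⌈(N : ℝ) / (d + 1)⌉₊ ≤
          Nat.card {i : Fin N // (inner ℝ u (x i) : ℝ) ≤ (inner ℝ u η : ℝ)} := by
  obtain ⟨η, hη⟩ := exists_centerpoint (𝕜 := ℝ) (k := ⌈(N : ℝ) / (d + 1)⌉₊) x
    (by simpa using mul_ceil_div_sub_one_lt hN d)
  refine ⟨η, fun u _ ↦ ?_⟩
  rw [Nat.card_eq_fintype_card, Fintype.card_subtype]
  exact hη (innerₛₗ ℝ u)
end

section
/- Suppose that for some r > 0 and a family B of unit-dual vectors, at least (1 − 1/(2d)) · K of the block means X̄_k satisfy sup_{v ∈ B} |⟨X̄_k − μ, v⟩| ≤ r, where B satisfies sup_{v ∈ B} ⟨w, v⟩ = ‖w‖ for all w. Then any Tukey median μ̂ = argmin_η sup_{v ∈ B} Σ_{k=1}^K 1_{⟨X̄_k − η, v⟩ > 0} computed on the K block means satisfies ‖μ̂ − μ‖ ≤ r, provided the minimal attainable value of sup_{v ∈ B} Σ_k 1_{⟨X̄_k − η, v⟩ > 0} is strictly less than dK/(d+1). -/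
/-!
If `‖μ̂ - μ‖ > r`, the norming family `B` contains a direction `v` with `⟨μ - μ̂, v⟩ > r`.
Every good block mean is within `r` of `μ` along `v`, so it lies strictly on the positive side
of the hyperplane through `μ̂` orthogonal to `v`. Hence the depth of `μ̂` is at least the number
of good blocks, `(1 - 1/(2d)) K`, which is not below `d K / (d + 1)`.
-/

open RealInnerProductSpace

theorem Real.exists_lt_of_lt_iSup {ι : Sort*} {f : ι → ℝ} {r : ℝ} (hr : 0 ≤ r)
    (h : r < ⨆ i, f i) : ∃ i, r < f i := by
  by_contra! hle
  exact h.not_ge (Real.iSup_le hle hr)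

theorem Nat.card_subtype_mono {α : Type*} [Finite α] {p q : α → Prop} (h : ∀ x, p x → q x) :
    Nat.card {x // p x} ≤ Nat.card {x // q x} :=
  Nat.card_le_card_of_injective _ (Subtype.impEmbedding p q h).injective

theorem Nat.card_subtype_fin_le {K : ℕ} (p : Fin K → Prop) : Nat.card {k // p k} ≤ K :=
  (Finite.card_subtype_le p).trans_eq (Nat.card_fin K)

theorem card_subtype_fin_le_iSup {ι : Sort*} {K : ℕ} (p : ι → Fin K → Prop) (i : ι) :
    (Nat.card {k // p i k} : ℝ) ≤ ⨆ j, (Nat.card {k // p j k} : ℝ) :=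
  le_ciSup (f := fun j ↦ (Nat.card {k // p j k} : ℝ))
    ⟨K, by rintro _ ⟨j, rfl⟩; exact Nat.cast_le.mpr (Nat.card_subtype_fin_le (p j))⟩ i

section InnerProduct

variable {E : Type*} [NormedAddCommGroup E] [InnerProductSpace ℝ E]

theorem inner_sub_pos_of_abs_inner_sub_le {x μ η v : E} {r : ℝ}
    (hx : |⟪x - μ, v⟫| ≤ r) (hfar : r < ⟪μ - η, v⟫) : 0 < ⟪x - η, v⟫ := by
  have hsplit : ⟪x - η, v⟫ = ⟪x - μ, v⟫ + ⟪μ - η, v⟫ := by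
    rw [← inner_add_left, sub_add_sub_cancel]
  linarith [(abs_le.mp hx).1]

theorem exists_mem_lt_inner_of_lt_norm {B : Set E} (hB : ∀ w : E, ⨆ v : B, ⟪w, (v : E)⟫ = ‖w‖)
    {w : E} {r : ℝ} (hr : 0 ≤ r) (hw : r < ‖w‖) : ∃ v ∈ B, r < ⟪w, v⟫ := by
  rw [← hB w] at hw
  obtain ⟨⟨v, hvB⟩, hv⟩ := Real.exists_lt_of_lt_iSup hr hw
  exact ⟨v, hvB, hv⟩

end InnerProduct

theorem mul_div_add_one_le_one_sub_one_div_two_mul_mul (d K : ℕ) :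
    (d : ℝ) * K / (d + 1) ≤ (1 - 1 / (2 * d)) * K := by
  rcases Nat.eq_zero_or_pos d with rfl | hd
  · simp
  have hd' : (1 : ℝ) ≤ d := by exact_mod_cast hd
  have hK : (0 : ℝ) ≤ K := K.cast_nonneg
  rw [div_le_iff₀ (by positivity), one_sub_div (by positivity)]
  field_simp
  nlinarith

theorem stmt15_general (d K : ℕ)
    (Xb : Fin K → EuclideanSpace ℝ (Fin d)) (μ : EuclideanSpace ℝ (Fin d))
    (B : Set (EuclideanSpace ℝ (Fin d))) (r : ℝ) (hr : 0 < r)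
    (hB : ∀ w : EuclideanSpace ℝ (Fin d), (⨆ v : B, (inner ℝ w (v : EuclideanSpace ℝ (Fin d)) : ℝ)) = ‖w‖)
    (hgood : (1 - 1 / (2 * (d : ℝ))) * K ≤
      (Nat.card {k : Fin K // ∀ v ∈ B, |(inner ℝ (Xb k - μ) v : ℝ)| ≤ r} : ℝ))
    (μh : EuclideanSpace ℝ (Fin d))
    (hdepth : (⨆ v : B, (Nat.card {k : Fin K // 0 < (inner ℝ (Xb k - μh) (v : EuclideanSpace ℝ (Fin d)) : ℝ)} : ℝ)) <
      (d : ℝ) * K / (d + 1)) :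
    ‖μh - μ‖ ≤ r := by
  by_contra! hfar
  rw [norm_sub_rev] at hfar
  obtain ⟨v, hvB, hv⟩ := exists_mem_lt_inner_of_lt_norm hB hr.le hfar
  have hgood_le_pos : (Nat.card {k // ∀ w ∈ B, |⟪Xb k - μ, w⟫| ≤ r} : ℝ) ≤
      Nat.card {k // 0 < ⟪Xb k - μh, v⟫} :=
    Nat.cast_le.mpr <| Nat.card_subtype_mono fun k hk ↦
      inner_sub_pos_of_abs_inner_sub_le (hk v hvB) hv
  have hpos_le_depth := card_subtype_fin_le_iSup
    (fun w : B ↦ fun k ↦ 0 < ⟪Xb k - μh, (w : EuclideanSpace ℝ (Fin d))⟫) ⟨v, hvB⟩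
  linarith [mul_div_add_one_le_one_sub_one_div_two_mul_mul d K]

/-- Deterministic Tukey median-of-means bound: if at least `(1 − 1/(2d))·K` of the block
means satisfy `sup_{v∈B} |⟨X̄_k − μ, v⟩| ≤ r`, where `sup_{v∈B} ⟨w,v⟩ = ‖w‖`, then any
Tukey median `μ̂` (minimizer over `η` of `sup_{v∈B} #{k : ⟨X̄_k − η, v⟩ > 0}`) whose
minimal depth value is strictly less than `dK/(d+1)` satisfies `‖μ̂ − μ‖ ≤ r`. -/
theorem stmt15 (d K : ℕ) (hd : 0 < d) (hK : 0 < K)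
    (Xb : Fin K → EuclideanSpace ℝ (Fin d)) (μ : EuclideanSpace ℝ (Fin d))
    (B : Set (EuclideanSpace ℝ (Fin d))) (r : ℝ) (hr : 0 < r)
    (hB : ∀ w : EuclideanSpace ℝ (Fin d), (⨆ v : B, (inner ℝ w (v : EuclideanSpace ℝ (Fin d)) : ℝ)) = ‖w‖)
    (hgood : (1 - 1 / (2 * (d : ℝ))) * K ≤
      (Nat.card {k : Fin K // ∀ v ∈ B, |(inner ℝ (Xb k - μ) v : ℝ)| ≤ r} : ℝ))
    (μh : EuclideanSpace ℝ (Fin d))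
    (hmin : ∀ η : EuclideanSpace ℝ (Fin d),
      (⨆ v : B, (Nat.card {k : Fin K // 0 < (inner ℝ (Xb k - μh) (v : EuclideanSpace ℝ (Fin d)) : ℝ)} : ℝ)) ≤
      (⨆ v : B, (Nat.card {k : Fin K // 0 < (inner ℝ (Xb k - η) (v : EuclideanSpace ℝ (Fin d)) : ℝ)} : ℝ)))
    (hdepth : (⨆ v : B, (Nat.card {k : Fin K // 0 < (inner ℝ (Xb k - μh) (v : EuclideanSpace ℝ (Fin d)) : ℝ)} : ℝ)) <
      (d : ℝ) * K / (d + 1)) :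
    ‖μh - μ‖ ≤ r :=
  stmt15_general d K Xb μ B r hr hB hgood μh hdepth
end

section
/- Let Σ and Σ̂ be symmetric positive semidefinite d×d matrices with eigenvalues λ_1 ≥ ... ≥ λ_d of Σ, and let Δ_k = λ_k − λ_{k+1} > 0. If ‖Σ̂ − Σ‖_op ≤ Δ_k/2, then the orthogonal projectors P_k and P̂_k onto the top-k eigenspaces of Σ and Σ̂ respectively satisfy ‖P̂_k − P_k‖_op ≤ (2/Δ_k) ‖Σ̂ − Σ‖_op (up to a universal constant). -/
/-!
Weyl's inequality keeps the `k`-th and `(k+1)`-st eigenvalues of `Σ̂` within `‖Σ̂ - Σ‖` of those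
of `Σ`, so when `‖Σ̂ - Σ‖ ≤ Δ/2` the top eigenspace of each operator is separated from the bottom
eigenspace of the other by a gap of at least `Δ/2`. Write `P̂ - P = P̂ (1 - P) - (1 - P̂) P` and
bound each term by the `sin Θ` theorem: if `A`, `B` are spectral projections with `S₁ ≥ β` on the
range of `A` and `S₂ ≤ α` on the range of `B`, a top singular pair `x`, `y` of `A B` lies in these
ranges, and `⟪x, (S₁ - S₂) y⟫ = ‖A B‖ (⟪x, S₁ x⟫ - ⟪y, S₂ y⟫) ≥ ‖A B‖ (β - α)`.
This gives `‖P̂ - P‖ ≤ 2 ‖Σ̂ - Σ‖ / (Δ/2)`, i.e. the theorem with `C = 2`.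
-/

open scoped RealInnerProductSpace

variable {E : Type*} [NormedAddCommGroup E] [InnerProductSpace ℝ E]

theorem exists_orthonormalBasis_coe_eq [FiniteDimensional ℝ E] {ι : Type*} [Fintype ι]
    {v : ι → E} (hv : Orthonormal ℝ v) (hcard : Fintype.card ι = Module.finrank ℝ E) :
    ∃ b : OrthonormalBasis ι ℝ E, ⇑b = v :=
  ⟨.mk hv (hv.linearIndependent.span_eq_top_of_card_eq_finrank' hcard).ge, by simp⟩

theorem exists_ne_zero_forall_inner_eq_zero [FiniteDimensional ℝ E] {α : Type*} [Fintype α]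
    (u : α → E) (h : Fintype.card α < Module.finrank ℝ E) : ∃ x ≠ 0, ∀ a, ⟪u a, x⟫ = 0 := by
  obtain ⟨x, hx, hx0⟩ := Submodule.exists_mem_ne_zero_of_ne_bot
    (LinearMap.ker_ne_bot_of_finrank_lt (f := LinearMap.pi fun a => innerₛₗ ℝ (u a))
      (by simpa using h))
  exact ⟨x, hx0, fun a => congrFun (LinearMap.mem_ker.mp hx) a⟩

theorem ContinuousLinearMap.exists_singular_pair [FiniteDimensional ℝ E] {X : E →L[ℝ] E}
    (hX : X ≠ 0) :
    ∃ x y : E, ‖x‖ = 1 ∧ ‖y‖ = 1 ∧ X y = ‖X‖ • x ∧ adjoint X x = ‖X‖ • y := by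
  have hs : 0 < ‖X‖ := norm_pos_iff.mpr hX
  have : Nontrivial E := by
    by_contra h
    rw [not_nontrivial_iff_subsingleton] at h
    exact hX (Subsingleton.elim _ _)
  obtain ⟨y, hy, hXy⟩ : ∃ y ∈ Metric.sphere (0 : E) 1, ‖X y‖ = ‖X‖ := by
    rw [← X.sSup_sphere_eq_norm]
    exact ((isCompact_sphere 0 1).image (by fun_prop)).sSup_mem
      ((NormedSpace.sphere_nonempty.mpr zero_le_one).image _)
  rw [mem_sphere_zero_iff_norm] at hy
  set x := ‖X‖⁻¹ • X y
  have hx : ‖x‖ = 1 := by rw [norm_smul, norm_inv, norm_norm, hXy, inv_mul_cancel₀ hs.ne']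
  refine ⟨x, y, hx, hy, by rw [smul_inv_smul₀ hs.ne'], ?_⟩
  -- `adjoint X x` has norm at most `‖X‖` and inner product `‖X‖` with the unit vector `y`:
  -- the equality case of Cauchy–Schwarz.
  have hinner : ⟪adjoint X x, y⟫ = ‖X‖ := by
    rw [adjoint_inner_left, real_inner_smul_left, real_inner_self_eq_norm_sq, hXy]
    field_simp
  have hnorm : ‖adjoint X x‖ ≤ ‖X‖ := by
    simpa [hx] using (adjoint X).le_opNorm x
  have hdist : ‖adjoint X x - ‖X‖ • y‖ ^ 2 ≤ 0 := by
    rw [norm_sub_sq_real, real_inner_smul_right, hinner, norm_smul, norm_norm, hy]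
    nlinarith [norm_nonneg (adjoint X x)]
  exact sub_eq_zero.mp (norm_eq_zero.mp (by nlinarith [norm_nonneg (adjoint X x - ‖X‖ • y)]))

theorem IsStarProjection.norm_mul_mul_sub_le [FiniteDimensional ℝ E] {A B S₁ S₂ : E →L[ℝ] E}
    {α β : ℝ} (hA : IsStarProjection A) (hB : IsStarProjection B)
    (hAS : Commute A S₁) (hBS : Commute B S₂)
    (hβ : ∀ x, A x = x → β * ‖x‖ ^ 2 ≤ ⟪x, S₁ x⟫)
    (hα : ∀ y, B y = y → ⟪y, S₂ y⟫ ≤ α * ‖y‖ ^ 2) :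
    ‖A * B‖ * (β - α) ≤ ‖S₁ - S₂‖ := by
  rcases eq_or_ne (A * B) 0 with h0 | h0
  · simp [h0]
  obtain ⟨x, y, hx, hy, hABy, hBAx⟩ := (A * B).exists_singular_pair h0
  set s := ‖A * B‖
  have hs : s ≠ 0 := norm_ne_zero_iff.mpr h0
  rw [← ContinuousLinearMap.star_eq_adjoint, star_mul, hA.isSelfAdjoint.star_eq,
    hB.isSelfAdjoint.star_eq] at hBAx
  rw [mul_apply_eq_comp] at hABy hBAx
  have hAx : A x = x := by
    have h := congrArg A hABy
    rwa [← mul_apply_eq_comp A, hA.isIdempotentElem.eq, hABy, map_smul, smul_right_inj hs,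
      eq_comm] at h
  have hBy : B y = y := by
    have h := congrArg B hBAx
    rwa [← mul_apply_eq_comp B, hB.isIdempotentElem.eq, hBAx, map_smul, smul_right_inj hs,
      eq_comm] at h
  have h₁ : ⟪x, S₁ y⟫ = s * ⟪x, S₁ x⟫ :=
    calc ⟪x, S₁ y⟫ = ⟪A x, S₁ y⟫ := by rw [hAx]
      _ = ⟪x, A (S₁ y)⟫ := hA.isSelfAdjoint.isSymmetric x _
      _ = ⟪x, S₁ (A y)⟫ := by rw [← mul_apply_eq_comp, hAS.eq, mul_apply_eq_comp]
      _ = s * ⟪x, S₁ x⟫ := by rw [← hBy, hABy, map_smul, real_inner_smul_right]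
  have h₂ : ⟪x, S₂ y⟫ = s * ⟪y, S₂ y⟫ :=
    calc ⟪x, S₂ y⟫ = ⟪x, S₂ (B y)⟫ := by rw [hBy]
      _ = ⟪x, B (S₂ y)⟫ := by rw [← mul_apply_eq_comp, ← hBS.eq, mul_apply_eq_comp]
      _ = ⟪B x, S₂ y⟫ := (hB.isSelfAdjoint.isSymmetric x _).symm
      _ = s * ⟪y, S₂ y⟫ := by rw [← hAx, hBAx, real_inner_smul_left]
  have hβx := hβ x hAx
  have hαy := hα y hBy
  rw [hx] at hβx
  rw [hy] at hαy
  calc s * (β - α) ≤ s * ⟪x, S₁ x⟫ - s * ⟪y, S₂ y⟫ := by nlinarith [norm_nonneg (A * B)]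
    _ = ⟪x, (S₁ - S₂) y⟫ := by rw [sub_apply, inner_sub_right, h₁, h₂]
    _ ≤ ‖x‖ * ‖(S₁ - S₂) y‖ := real_inner_le_norm _ _
    _ ≤ ‖S₁ - S₂‖ := by simpa [hx, hy] using (S₁ - S₂).le_opNorm y

namespace Orthonormal

variable {ι : Type*} [Fintype ι] {v : ι → E} (hv : Orthonormal ℝ v)
include hv

theorem sum_smul_inner_smul_self (f : ι → ℝ) (j : ι) :
    ∑ i, f i • (⟪v i, v j⟫ • v i) = f j • v j := by
  classical
  simp [orthonormal_iff_ite.mp hv]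

theorem sum_filter_inner_smul_self (p : ι → Prop) [DecidablePred p] (j : ι) :
    ∑ i ∈ Finset.univ.filter p, ⟪v i, v j⟫ • v i = {i | p i}.indicator (1 : ι → ℝ) j • v j := by
  classical
  simp [orthonormal_iff_ite.mp hv, Set.indicator_apply]

end Orthonormal

namespace OrthonormalBasis

variable {ι : Type*} [Fintype ι] (b : OrthonormalBasis ι ℝ E) {S T : E →L[ℝ] E} {f g : ι → ℝ}

theorem inner_apply_eq_mul_inner (hS : ∀ i, S (b i) = f i • b i) (i : ι) (x : E) :
    ⟪b i, S x⟫ = f i * ⟪b i, x⟫ := by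
  conv_lhs => rw [← b.sum_repr' x]
  simp_rw [map_sum, map_smul, hS, smul_smul]
  rw [b.orthonormal.inner_right_fintype, mul_comm]

theorem isSelfAdjoint_of_apply_eq_smul [CompleteSpace E] (hS : ∀ i, S (b i) = f i • b i) :
    IsSelfAdjoint S := by
  refine ContinuousLinearMap.isSelfAdjoint_iff_isSymmetric.mpr fun x y => ?_
  change ⟪S x, y⟫ = ⟪x, S y⟫
  rw [← b.sum_inner_mul_inner, ← b.sum_inner_mul_inner x]
  congr! 1 with i
  rw [real_inner_comm (b i) (S x), real_inner_comm (b i) x, b.inner_apply_eq_mul_inner hS,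
    b.inner_apply_eq_mul_inner hS]
  ring

theorem commute_of_apply_eq_smul (hS : ∀ i, S (b i) = f i • b i)
    (hT : ∀ i, T (b i) = g i • b i) : Commute S T :=
  ContinuousLinearMap.coe_injective <| b.toBasis.ext fun i => by
    simp [hS, hT, smul_smul, mul_comm]

theorem inner_apply_self_eq_sum (hS : ∀ i, S (b i) = f i • b i) (x : E) :
    ⟪x, S x⟫ = ∑ i, f i * ⟪b i, x⟫ ^ 2 := by
  rw [← b.sum_inner_mul_inner]
  congr! 1 with i
  rw [b.inner_apply_eq_mul_inner hS, real_inner_comm]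
  ring

theorem mul_sq_norm_le_inner_apply_self (hS : ∀ i, S (b i) = f i • b i) {x : E} {β : ℝ}
    (hx : ∀ i, ⟪b i, x⟫ ≠ 0 → β ≤ f i) : β * ‖x‖ ^ 2 ≤ ⟪x, S x⟫ := by
  rw [b.inner_apply_self_eq_sum hS, ← b.sum_sq_inner_right, Finset.mul_sum]
  refine Finset.sum_le_sum fun i _ => ?_
  by_cases h : ⟪b i, x⟫ = 0
  · simp [h]
  · exact mul_le_mul_of_nonneg_right (hx i h) (sq_nonneg _)

theorem inner_apply_self_le_mul_sq_norm (hS : ∀ i, S (b i) = f i • b i) {x : E} {α : ℝ}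
    (hx : ∀ i, ⟪b i, x⟫ ≠ 0 → f i ≤ α) : ⟪x, S x⟫ ≤ α * ‖x‖ ^ 2 := by
  rw [b.inner_apply_self_eq_sum hS, ← b.sum_sq_inner_right, Finset.mul_sum]
  refine Finset.sum_le_sum fun i _ => ?_
  by_cases h : ⟪b i, x⟫ = 0
  · simp [h]
  · exact mul_le_mul_of_nonneg_right (hx i h) (sq_nonneg _)

section Projection

variable {P : E →L[ℝ] E} {s : Set ι} (hP : ∀ i, P (b i) = s.indicator (1 : ι → ℝ) i • b i)
include hP

theorem isStarProjection_of_apply_eq_indicator_smul [CompleteSpace E] : IsStarProjection P := by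
  refine ⟨ContinuousLinearMap.coe_injective <| b.toBasis.ext fun i => ?_,
    b.isSelfAdjoint_of_apply_eq_smul hP⟩
  by_cases hi : i ∈ s <;> simp [hP, hi]

theorem one_sub_apply_eq_indicator_compl_smul (i : ι) :
    (1 - P) (b i) = sᶜ.indicator (1 : ι → ℝ) i • b i := by
  by_cases hi : i ∈ s <;> simp [hP, hi]

theorem mem_of_apply_eq_self {x : E} (hx : P x = x) {i : ι} (hi : ⟪b i, x⟫ ≠ 0) : i ∈ s := by
  by_contra his
  rw [← hx, b.inner_apply_eq_mul_inner hP, Set.indicator_of_notMem his, zero_mul] at hi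
  exact hi rfl

end Projection

/-- Weyl's inequality. A nonzero `x` orthogonal to the `c i` with `m < i` and to the `b i` with
`i < m` exists by counting dimensions; then `g m ‖x‖² ≤ ⟪x, T x⟫` and `⟪x, S x⟫ ≤ f m ‖x‖²`. -/
theorem apply_le_apply_add_norm_sub [FiniteDimensional ℝ E] [LinearOrder ι]
    (c : OrthonormalBasis ι ℝ E) (hS : ∀ i, S (b i) = f i • b i) (hT : ∀ i, T (c i) = g i • c i)
    (hf : Antitone f) (hg : Antitone g) (m : ι) : g m ≤ f m + ‖T - S‖ := by
  have hcard : Fintype.card ({i // m < i} ⊕ {i // i < m}) < Module.finrank ℝ E := by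
    rw [Module.finrank_eq_card_basis b.toBasis]
    refine Fintype.card_lt_of_injective_of_notMem (Sum.elim Subtype.val Subtype.val)
      (Subtype.val_injective.sumElim Subtype.val_injective fun i j h => lt_irrefl m ((i.2.trans_eq h).trans j.2))
      (b := m) ?_
    rintro ⟨i | i, h⟩
    exacts [i.2.ne' h, i.2.ne h]
  obtain ⟨x, hx0, hx⟩ := exists_ne_zero_forall_inner_eq_zero
    (Sum.elim (fun i : {i // m < i} => c i) (fun i : {i // i < m} => b i)) hcard
  have hTx : g m * ‖x‖ ^ 2 ≤ ⟪x, T x⟫ := c.mul_sq_norm_le_inner_apply_self hT fun i hi =>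
    hg (not_lt.mp fun hmi => hi (hx (.inl ⟨i, hmi⟩)))
  have hSx : ⟪x, S x⟫ ≤ f m * ‖x‖ ^ 2 := b.inner_apply_self_le_mul_sq_norm hS fun i hi =>
    hf (not_lt.mp fun him => hi (hx (.inr ⟨i, him⟩)))
  have hdiff : ⟪x, T x⟫ - ⟪x, S x⟫ ≤ ‖T - S‖ * ‖x‖ ^ 2 := by
    rw [← inner_sub_right, ← sub_apply]
    calc ⟪x, (T - S) x⟫ ≤ ‖x‖ * ‖(T - S) x‖ := real_inner_le_norm _ _
      _ ≤ ‖x‖ * (‖T - S‖ * ‖x‖) := by gcongr; exact (T - S).le_opNorm x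
      _ = ‖T - S‖ * ‖x‖ ^ 2 := by ring
  have hx2 : 0 < ‖x‖ ^ 2 := by positivity
  nlinarith

theorem norm_mul_mul_sub_le_of_apply_eq_smul [FiniteDimensional ℝ E]
    (c : OrthonormalBasis ι ℝ E) {A B : E →L[ℝ] E} {s t : Set ι} {α β : ℝ}
    (hA : ∀ i, A (c i) = s.indicator (1 : ι → ℝ) i • c i)
    (hB : ∀ i, B (b i) = t.indicator (1 : ι → ℝ) i • b i)
    (hT : ∀ i, T (c i) = g i • c i) (hS : ∀ i, S (b i) = f i • b i)
    (hg : ∀ i ∈ s, β ≤ g i) (hf : ∀ i ∈ t, f i ≤ α) :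
    ‖A * B‖ * (β - α) ≤ ‖T - S‖ :=
  (c.isStarProjection_of_apply_eq_indicator_smul hA).norm_mul_mul_sub_le
    (b.isStarProjection_of_apply_eq_indicator_smul hB)
    (c.commute_of_apply_eq_smul hA hT) (b.commute_of_apply_eq_smul hB hS)
    (fun _ hx => c.mul_sq_norm_le_inner_apply_self hT fun i hi =>
      hg i (c.mem_of_apply_eq_self hA hx hi))
    (fun _ hy => b.inner_apply_self_le_mul_sq_norm hS fun i hi =>
      hf i (b.mem_of_apply_eq_self hB hy hi))

theorem norm_sub_mul_sub_le_four_mul_norm_sub [FiniteDimensional ℝ E] [LinearOrder ι]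
    (c : OrthonormalBasis ι ℝ E) {P Q : E →L[ℝ] E} {m m' : ι} (hm : m ⋖ m')
    (hS : ∀ i, S (b i) = f i • b i) (hT : ∀ i, T (c i) = g i • c i)
    (hP : ∀ i, P (b i) = (Set.Iio m').indicator (1 : ι → ℝ) i • b i)
    (hQ : ∀ i, Q (c i) = (Set.Iio m').indicator (1 : ι → ℝ) i • c i)
    (hf : Antitone f) (hg : Antitone g) (hgap : 2 * ‖T - S‖ ≤ f m - f m') :
    ‖Q - P‖ * (f m - f m') ≤ 4 * ‖T - S‖ := by
  have htop : ∀ i ∈ Set.Iio m', i ≤ m := fun i hi => hm.le_of_lt hi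
  have hbot : ∀ i ∈ (Set.Iio m')ᶜ, m' ≤ i := fun i hi => not_lt.mp hi
  have h₁ := b.norm_mul_mul_sub_le_of_apply_eq_smul c hQ
    (b.one_sub_apply_eq_indicator_compl_smul hP) hT hS
    (fun i hi => hg (htop i hi)) (fun i hi => hf (hbot i hi))
  have h₂ := b.norm_mul_mul_sub_le_of_apply_eq_smul c
    (c.one_sub_apply_eq_indicator_compl_smul hQ) hP (T := -T) (S := -S) (g := -g) (f := -f)
    (by simp [hT]) (by simp [hS])
    (fun i hi => neg_le_neg (hg (hbot i hi))) (fun i hi => neg_le_neg (hf (htop i hi)))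
  rw [neg_sub_neg, neg_sub_neg, norm_sub_rev] at h₂
  have hweyl₁ := b.apply_le_apply_add_norm_sub c hS hT hf hg m'
  have hweyl₂ := c.apply_le_apply_add_norm_sub b hT hS hg hf m
  rw [norm_sub_rev] at hweyl₂
  have hsplit : Q - P = Q * (1 - P) - (1 - Q) * P := by
    rw [mul_sub, sub_mul, mul_one, one_mul]
    abel
  calc ‖Q - P‖ * (f m - f m') ≤ (‖Q * (1 - P)‖ + ‖(1 - Q) * P‖) * (f m - f m') := by
        gcongr
        · linarith [norm_nonneg (T - S)]
        · exact hsplit ▸ norm_sub_le _ _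
    _ ≤ 4 * ‖T - S‖ := by nlinarith [norm_nonneg (Q * (1 - P)), norm_nonneg ((1 - Q) * P)]

end OrthonormalBasis

/-- Eigenvalues are `0`-indexed: the top `k` are those with index `i < k`, and the gap `Δ_k` is
`lam (k - 1) - lam k`. -/
theorem stmt16 :
    ∃ C : ℝ, 0 < C ∧
      ∀ (d k : ℕ) (hk1 : 1 ≤ k) (hkd : k < d)
        (Sg Sh : EuclideanSpace ℝ (Fin d) →L[ℝ] EuclideanSpace ℝ (Fin d))
        (lam mu : Fin d → ℝ) (v w : Fin d → EuclideanSpace ℝ (Fin d)),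
        Orthonormal ℝ v → Orthonormal ℝ w →
        Antitone lam → Antitone mu →
        (∀ i, 0 ≤ lam i) → (∀ i, 0 ≤ mu i) →
        (∀ x, Sg x = ∑ i, lam i • ((inner ℝ (v i) x : ℝ) • v i)) →
        (∀ x, Sh x = ∑ i, mu i • ((inner ℝ (w i) x : ℝ) • w i)) →
        ∀ (P Ph : EuclideanSpace ℝ (Fin d) →L[ℝ] EuclideanSpace ℝ (Fin d)),
        (∀ x, P x = ∑ i ∈ Finset.univ.filter fun i : Fin d => (i : ℕ) < k,
            (inner ℝ (v i) x : ℝ) • v i) →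
        (∀ x, Ph x = ∑ i ∈ Finset.univ.filter fun i : Fin d => (i : ℕ) < k,
            (inner ℝ (w i) x : ℝ) • w i) →
        0 < lam ⟨k - 1, by omega⟩ - lam ⟨k, hkd⟩ →
        ‖Sh - Sg‖ ≤ (lam ⟨k - 1, by omega⟩ - lam ⟨k, hkd⟩) / 2 →
        ‖Ph - P‖ ≤ C * (2 / (lam ⟨k - 1, by omega⟩ - lam ⟨k, hkd⟩)) * ‖Sh - Sg‖ := by
  refine ⟨2, two_pos, ?_⟩
  intro d k hk1 hkd Sg Sh lam mu v w hv hw hlam hmu _ _ hSg hSh P Ph hP hPh hΔ hε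
  obtain ⟨v, rfl⟩ := exists_orthonormalBasis_coe_eq hv (by simp)
  obtain ⟨w, rfl⟩ := exists_orthonormalBasis_coe_eq hw (by simp)
  have htop : {i : Fin d | (i : ℕ) < k} = Set.Iio ⟨k, hkd⟩ := by
    ext i
    simp [Fin.lt_def]
  have hcov : (⟨k - 1, by omega⟩ : Fin d) ⋖ ⟨k, hkd⟩ := by
    simp only [Fin.covBy_iff, Nat.covBy_iff_add_one_eq]
    omega
  have key := v.norm_sub_mul_sub_le_four_mul_norm_sub w hcov
    (fun i => (hSg _).trans (v.orthonormal.sum_smul_inner_smul_self lam i))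
    (fun i => (hSh _).trans (w.orthonormal.sum_smul_inner_smul_self mu i))
    (fun i => htop ▸ (hP _).trans (v.orthonormal.sum_filter_inner_smul_self _ i))
    (fun i => htop ▸ (hPh _).trans (w.orthonormal.sum_filter_inner_smul_self _ i))
    hlam hmu (by linarith)
  rw [show ∀ Δ ε : ℝ, 2 * (2 / Δ) * ε = 4 * ε / Δ by intros; ring, le_div_iff₀ hΔ]
  exact key
end
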